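/- Under the GSVD structure, the subspaces S_ba and S_be together span the orthogonal complement of the kernel of H_ba: S_ba + S_be = (ker H_ba)^⊥ (as subspaces of ℂ^{N_t}). -/

import Mathlib

/-!
After the unitary change of coordinates `x ↦ U_aᴴ x`, both kernels become coordinate subspaces:
every row of `Σ [Ω⁻¹ 0]` has at most one nonzero entry, so `Σ [Ω⁻¹ 0] x = 0` just says that `x`
vanishes on the columns carrying a nonzero entry, and the unitary left factors do not change
kernels. For coordinate subspaces `V_S = {x | x = 0 on S}` one has `V_Sᗮ = V_{Sᶜ}`,
`V_S ⊓ V_T = V_{S ∪ T}` and `V_S ⊔ V_T = V_{S ∩ T}`, so with `(ker H_ba)ᗮ = V_A` and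
`ker H_ea = V_T` the left-hand side is `V_{(A ∪ T) ∩ (A ∪ Tᶜ)} = V_A`.
-/

open Matrix

/-- The `N_r × k` GSVD factor `Σ_ba`: row blocks of sizes `N_r−r−s, s, r` and column blocks
of sizes `k−r−s, s, r`; the only nonzero blocks are the `(2,2)` block `diag(b_1,…,b_s)` and
the `(3,3)` block `I_r`.  (Row `i` is paired with column `j` iff `i + k = j + N_r`.) -/
noncomputable def SigmaBa (Nr k r s : ℕ) (b : ℕ → ℝ) : Matrix (Fin Nr) (Fin k) ℂ :=
  Matrix.of fun i j =>
    if (i : ℕ) + k = (j : ℕ) + Nr ∧ Nr - (r + s) ≤ (i : ℕ) then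
      if (i : ℕ) < Nr - r then ((b ((i : ℕ) - (Nr - (r + s))) : ℝ) : ℂ) else 1
    else 0

/-- The `N_e × k` GSVD factor `Σ_ea`: row blocks of sizes `k−r−s, s, N_e−k+r` and column blocks
of sizes `k−r−s, s, r`; the only nonzero blocks are the `(1,1)` block `I_{k−r−s}` and the
`(2,2)` block `diag(e_1,…,e_s)`. -/
noncomputable def SigmaEa (Ne k r s : ℕ) (e : ℕ → ℝ) : Matrix (Fin Ne) (Fin k) ℂ :=
  Matrix.of fun i j =>
    if (i : ℕ) = (j : ℕ) ∧ (i : ℕ) < k - r then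
      if (i : ℕ) < k - (r + s) then 1 else ((e ((i : ℕ) - (k - (r + s))) : ℝ) : ℂ)
    else 0

/-- The `k × N_t` matrix `[Ω^{-1} 0]`, where `Ω = diag(ω_0,…,ω_{k-1})`. -/
noncomputable def OmegaInvZero (k Nt : ℕ) (ω : ℕ → ℂ) : Matrix (Fin k) (Fin Nt) ℂ :=
  Matrix.of fun i j => if (j : ℕ) = (i : ℕ) then (ω (i : ℕ))⁻¹ else 0

/-- The `N_t × N_t` matrix `A` with `Ω = diag(ω_0,…,ω_{k-1})` in its top-left `k × k` block
and zeros elsewhere. -/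
noncomputable def Amat (Nt k : ℕ) (ω : ℕ → ℂ) : Matrix (Fin Nt) (Fin Nt) ℂ :=
  Matrix.of fun i j => if (i : ℕ) = (j : ℕ) ∧ (i : ℕ) < k then ω (i : ℕ) else 0

namespace EuclideanSpace

variable {𝕜 ι : Type*} [RCLike 𝕜]

variable (𝕜) in
def vanishingOn (S : Set ι) : Submodule 𝕜 (EuclideanSpace 𝕜 ι) where
  carrier := {x | ∀ i ∈ S, x i = 0}
  add_mem' hx hy i hi := by simp [hx i hi, hy i hi]
  zero_mem' _ _ := rfl
  smul_mem' c x hx i hi := by simp [hx i hi]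

@[simp] lemma mem_vanishingOn {S : Set ι} {x : EuclideanSpace 𝕜 ι} :
    x ∈ vanishingOn 𝕜 S ↔ ∀ i ∈ S, x i = 0 := Iff.rfl

lemma vanishingOn_antitone : Antitone (vanishingOn 𝕜 (ι := ι)) :=
  fun _ _ hST _ hx i hi => hx i (hST hi)

lemma vanishingOn_union (S T : Set ι) :
    vanishingOn 𝕜 (S ∪ T) = vanishingOn 𝕜 S ⊓ vanishingOn 𝕜 T := by
  ext x
  simp [or_imp, forall_and]

lemma vanishingOn_inter (S T : Set ι) :
    vanishingOn 𝕜 (S ∩ T) = vanishingOn 𝕜 S ⊔ vanishingOn 𝕜 T := by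
  classical
  refine le_antisymm (fun x hx => ?_) (sup_le (vanishingOn_antitone Set.inter_subset_left)
    (vanishingOn_antitone Set.inter_subset_right))
  have hsplit : x = WithLp.toLp 2 (Sᶜ.indicator x) + WithLp.toLp 2 (S.indicator x) := by
    rw [← WithLp.toLp_add, Set.indicator_compl_add_self, WithLp.toLp_ofLp]
  rw [hsplit]
  refine Submodule.add_mem_sup (fun i hi => by simp [hi]) (fun i hi => ?_)
  by_cases hiS : i ∈ S
  · simpa [hiS] using hx i ⟨hiS, hi⟩
  · simp [hiS]

lemma orthogonal_vanishingOn [Fintype ι] (S : Set ι) :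
    (vanishingOn 𝕜 S)ᗮ = vanishingOn 𝕜 Sᶜ := by
  classical
  ext x
  rw [Submodule.mem_orthogonal]
  constructor
  · intro hx i hi
    have hsingle : single i (1 : 𝕜) ∈ vanishingOn 𝕜 S := fun j hj => by
      simp [show j ≠ i by rintro rfl; exact hi hj]
    simpa [inner_single_left] using hx _ hsingle
  · intro hx y hy
    refine Finset.sum_eq_zero fun i _ => ?_
    by_cases hi : i ∈ S
    · simp [hy i hi]
    · simp [hx i hi]

lemma orthogonal_vanishingOn_inf_sup [Fintype ι] (S T : Set ι) :
    (vanishingOn 𝕜 S)ᗮ ⊓ vanishingOn 𝕜 T ⊔ (vanishingOn 𝕜 S)ᗮ ⊓ (vanishingOn 𝕜 T)ᗮ =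
      (vanishingOn 𝕜 S)ᗮ := by
  simp only [orthogonal_vanishingOn, ← vanishingOn_union, ← vanishingOn_inter,
    ← Set.union_inter_distrib_left, Set.inter_compl_self, Set.union_empty]

end EuclideanSpace

namespace Matrix

variable {m n l α : Type*}

def HasSubsingletonRowSupport [Zero α] (M : Matrix m n α) : Prop :=
  ∀ i, (Function.support (M i)).Subsingleton

theorem HasSubsingletonRowSupport.mul [Fintype l] [NonUnitalNonAssocSemiring α]
    {M : Matrix m l α} {N : Matrix l n α} (hM : M.HasSubsingletonRowSupport)
    (hN : N.HasSubsingletonRowSupport) : (M * N).HasSubsingletonRowSupport := by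
  have hfactor : ∀ i j, (M * N) i j ≠ 0 → ∃ p, M i p ≠ 0 ∧ N p j ≠ 0 := fun i j h => by
    obtain ⟨p, -, hp⟩ := Finset.exists_ne_zero_of_sum_ne_zero h
    exact ⟨p, left_ne_zero_of_mul hp, right_ne_zero_of_mul hp⟩
  intro i j hj j' hj'
  obtain ⟨p, hMp, hNp⟩ := hfactor i j hj
  obtain ⟨p', hMp', hNp'⟩ := hfactor i j' hj'
  obtain rfl : p = p' := hM i hMp hMp'
  exact hN p hNp hNp'

variable {𝕜 : Type*} [RCLike 𝕜] [Fintype n] [DecidableEq n]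

open EuclideanSpace in
theorem ker_toEuclideanLin_eq_vanishingOn {M : Matrix m n 𝕜}
    (hM : M.HasSubsingletonRowSupport) :
    LinearMap.ker (toEuclideanLin M) = vanishingOn 𝕜 (⋃ i, Function.support (M i)) := by
  ext x
  simp only [LinearMap.mem_ker, mem_vanishingOn, Set.mem_iUnion, Function.mem_support,
    forall_exists_index, toLpLin_apply, WithLp.toLp_eq_zero, funext_iff,
    Pi.zero_apply, mulVec, dotProduct]
  constructor
  · intro hx j i hij
    have hrow := hx i
    have hoff : ∀ j' ≠ j, M i j' = 0 := fun j' hj' =>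
      Function.notMem_support.mp (mt (fun h => hM i hij h) (Ne.symm hj'))
    rw [Finset.sum_eq_single j (fun j' _ hj' => by rw [hoff j' hj', zero_mul]) (by simp)] at hrow
    exact (mul_eq_zero.mp hrow).resolve_left hij
  · intro hx i
    refine Finset.sum_eq_zero fun j _ => ?_
    by_cases hij : M i j = 0
    · simp [hij]
    · simp [hx j i hij]

noncomputable def UnitaryGroup.toLinearIsometryEquiv (U : unitaryGroup n 𝕜) :
    EuclideanSpace 𝕜 n ≃ₗᵢ[𝕜] EuclideanSpace 𝕜 n :=
  Unitary.linearIsometryEquiv ⟨toEuclideanCLM (n := n) (𝕜 := 𝕜) U, Unitary.map_mem _ U.2⟩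

theorem UnitaryGroup.toLinearIsometryEquiv_symm_apply (U : unitaryGroup n 𝕜)
    (x : EuclideanSpace 𝕜 n) :
    (UnitaryGroup.toLinearIsometryEquiv U).symm x = toEuclideanLin (U : Matrix n n 𝕜)ᴴ x := by
  apply (UnitaryGroup.toLinearIsometryEquiv U).injective
  rw [LinearIsometryEquiv.apply_symm_apply]
  change x = toEuclideanLin (U : Matrix n n 𝕜) (toEuclideanLin (U : Matrix n n 𝕜)ᴴ x)
  rw [← LinearMap.comp_apply, toEuclideanLin, ← toLpLin_mul_same, ← star_eq_conjTranspose,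
    Unitary.mul_star_self_of_mem U.2, toLpLin_one, LinearMap.id_apply]

theorem ker_toEuclideanLin_unitary_mul [Fintype m] [DecidableEq m] (U : unitaryGroup m 𝕜)
    (M : Matrix m n 𝕜) :
    LinearMap.ker (toEuclideanLin ((U : Matrix m m 𝕜) * M)) =
      LinearMap.ker (toEuclideanLin M) := by
  rw [toEuclideanLin, toLpLin_mul_same, LinearMap.ker_comp_of_ker_eq_bot]
  exact LinearMap.ker_eq_bot_of_injective (UnitaryGroup.toLinearIsometryEquiv U).injective

theorem ker_toEuclideanLin_mul_conjTranspose (U : unitaryGroup n 𝕜) (M : Matrix m n 𝕜) :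
    LinearMap.ker (toEuclideanLin (M * (U : Matrix n n 𝕜)ᴴ)) =
      (LinearMap.ker (toEuclideanLin M)).map
        ((UnitaryGroup.toLinearIsometryEquiv U).toLinearEquiv : _ →ₗ[𝕜] _) := by
  rw [Submodule.map_equiv_eq_comap_symm, toEuclideanLin, toLpLin_mul_same, LinearMap.ker_comp]
  congr 1
  ext x : 1
  exact (UnitaryGroup.toLinearIsometryEquiv_symm_apply U x).symm

theorem ker_toEuclideanLin_unitary_mul_mul_conjTranspose [Fintype m] [DecidableEq m]
    (U : unitaryGroup m 𝕜) {M : Matrix m n 𝕜} (hM : M.HasSubsingletonRowSupport)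
    (V : unitaryGroup n 𝕜) :
    LinearMap.ker (toEuclideanLin ((U : Matrix m m 𝕜) * M * (V : Matrix n n 𝕜)ᴴ)) =
      (EuclideanSpace.vanishingOn 𝕜 (⋃ i, Function.support (M i))).map
        ((UnitaryGroup.toLinearIsometryEquiv V).toLinearEquiv : _ →ₗ[𝕜] _) := by
  rw [ker_toEuclideanLin_mul_conjTranspose, ker_toEuclideanLin_unitary_mul,
    ker_toEuclideanLin_eq_vanishingOn hM]

end Matrix

theorem hasSubsingletonRowSupport_SigmaBa (Nr k r s : ℕ) (b : ℕ → ℝ) :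
    (SigmaBa Nr k r s b).HasSubsingletonRowSupport := by
  have hpaired : ∀ i j, SigmaBa Nr k r s b i j ≠ 0 → (i : ℕ) + k = j + Nr := fun i j h => by
    by_contra hc
    exact h (by simp [SigmaBa, hc])
  intro i j hj j' hj'
  have hj_paired := hpaired i j hj
  have hj'_paired := hpaired i j' hj'
  exact Fin.ext (by omega)

theorem hasSubsingletonRowSupport_SigmaEa (Ne k r s : ℕ) (e : ℕ → ℝ) :
    (SigmaEa Ne k r s e).HasSubsingletonRowSupport := by
  have hdiag : ∀ i j, SigmaEa Ne k r s e i j ≠ 0 → (i : ℕ) = j := fun i j h => by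
    by_contra hc
    exact h (by simp [SigmaEa, hc])
  intro i j hj j' hj'
  exact Fin.ext ((hdiag i j hj).symm.trans (hdiag i j' hj'))

theorem hasSubsingletonRowSupport_OmegaInvZero (k Nt : ℕ) (ω : ℕ → ℂ) :
    (OmegaInvZero k Nt ω).HasSubsingletonRowSupport := by
  have hdiag : ∀ i j, OmegaInvZero k Nt ω i j ≠ 0 → (j : ℕ) = i := fun i j h => by
    by_contra hc
    exact h (by simp [OmegaInvZero, hc])
  intro i j hj j' hj'
  exact Fin.ext ((hdiag i j hj).trans (hdiag i j' hj').symm)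

theorem S_ba_sup_S_be_general (Nt Nr Ne k r s : ℕ)
    (Ua : Matrix (Fin Nt) (Fin Nt) ℂ) (Uba : Matrix (Fin Nr) (Fin Nr) ℂ)
    (Uea : Matrix (Fin Ne) (Fin Ne) ℂ)
    (hUa : Ua ∈ Matrix.unitaryGroup (Fin Nt) ℂ)
    (hUba : Uba ∈ Matrix.unitaryGroup (Fin Nr) ℂ)
    (hUea : Uea ∈ Matrix.unitaryGroup (Fin Ne) ℂ)
    (ω : ℕ → ℂ)
    (b e : ℕ → ℝ)
    (Hba : Matrix (Fin Nr) (Fin Nt) ℂ) (Hea : Matrix (Fin Ne) (Fin Nt) ℂ)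
    (hHba : Hba = Uba * SigmaBa Nr k r s b * OmegaInvZero k Nt ω * Uaᴴ)
    (hHea : Hea = Uea * SigmaEa Ne k r s e * OmegaInvZero k Nt ω * Uaᴴ) :
    ((LinearMap.ker (Matrix.toEuclideanLin Hba))ᗮ ⊓ LinearMap.ker (Matrix.toEuclideanLin Hea)) ⊔ ((LinearMap.ker (Matrix.toEuclideanLin Hba))ᗮ ⊓ (LinearMap.ker (Matrix.toEuclideanLin Hea))ᗮ) = (LinearMap.ker (Matrix.toEuclideanLin Hba))ᗮ := by
  have hOmega := hasSubsingletonRowSupport_OmegaInvZero k Nt ω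
  rw [hHba, hHea, Matrix.mul_assoc Uba, Matrix.mul_assoc Uea,
    ker_toEuclideanLin_unitary_mul_mul_conjTranspose ⟨Uba, hUba⟩
      ((hasSubsingletonRowSupport_SigmaBa Nr k r s b).mul hOmega) ⟨Ua, hUa⟩,
    ker_toEuclideanLin_unitary_mul_mul_conjTranspose ⟨Uea, hUea⟩
      ((hasSubsingletonRowSupport_SigmaEa Ne k r s e).mul hOmega) ⟨Ua, hUa⟩]
  set V := UnitaryGroup.toLinearIsometryEquiv ⟨Ua, hUa⟩
  rw [← Submodule.map_orthogonal_equiv, ← Submodule.map_orthogonal_equiv,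
    ← Submodule.map_inf _ V.injective, ← Submodule.map_inf _ V.injective, ← Submodule.map_sup,
    EuclideanSpace.orthogonal_vanishingOn_inf_sup]

/-- Under the GSVD structure, `S_ba + S_be = (ker H_ba)^⊥`. -/
theorem S_ba_sup_S_be (Nt Nr Ne k r s : ℕ)
    (hNt : 0 < Nt) (hNr : 0 < Nr) (hNe : 0 < Ne)
    (hrsk : r + s ≤ k) (hkNt : k ≤ Nt) (hrsNr : r + s ≤ Nr) (hkrNe : k - r ≤ Ne)
    (Ua : Matrix (Fin Nt) (Fin Nt) ℂ) (Uba : Matrix (Fin Nr) (Fin Nr) ℂ)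
    (Uea : Matrix (Fin Ne) (Fin Ne) ℂ)
    (hUa : Ua ∈ Matrix.unitaryGroup (Fin Nt) ℂ)
    (hUba : Uba ∈ Matrix.unitaryGroup (Fin Nr) ℂ)
    (hUea : Uea ∈ Matrix.unitaryGroup (Fin Ne) ℂ)
    (ω : ℕ → ℂ) (hω : ∀ i < k, ω i ≠ 0)
    (b e : ℕ → ℝ)
    (hb : ∀ p < s, 0 < b p ∧ b p < 1) (he : ∀ p < s, 0 < e p ∧ e p < 1)
    (hbe : ∀ p < s, b p ^ 2 + e p ^ 2 = 1)
    (Hba : Matrix (Fin Nr) (Fin Nt) ℂ) (Hea : Matrix (Fin Ne) (Fin Nt) ℂ)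
    (hHba : Hba = Uba * SigmaBa Nr k r s b * OmegaInvZero k Nt ω * Uaᴴ)
    (hHea : Hea = Uea * SigmaEa Ne k r s e * OmegaInvZero k Nt ω * Uaᴴ) :
    ((LinearMap.ker (Matrix.toEuclideanLin Hba))ᗮ ⊓ LinearMap.ker (Matrix.toEuclideanLin Hea)) ⊔ ((LinearMap.ker (Matrix.toEuclideanLin Hba))ᗮ ⊓ (LinearMap.ker (Matrix.toEuclideanLin Hea))ᗮ) = (LinearMap.ker (Matrix.toEuclideanLin Hba))ᗮ :=
  S_ba_sup_S_be_general Nt Nr Ne k r s Ua Uba Uea hUa hUba hUea ω b e Hba Hea hHba hHea
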